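/- Let X be a BMC on (S,𝒮) with kernel 𝒫 and let 𝒬 = (P₀+P₁)/2. For all bounded measurable f : S → ℝ, x ∈ S and n ∈ ℕ (assuming the quantities are well defined): (i) E_x[M_{𝔾_n}(f)] = 2^n 𝒬^n f(x); (ii) E_x[M_{𝔾_n}(f)²] = 2^n 𝒬^n(f²)(x) + Σ_{k=0}^{n−1} 2^{n+k} 𝒬^{n−k−1}( 𝒫( 𝒬^k f ⊗ 𝒬^k f ) )(x). -/

import Mathlib

open MeasureTheory ProbabilityTheory Filter ENNReal

/-- The kernel `𝒬 = (P₀ + P₁)/2` applied at `x`. -/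
noncomputable def Qmeas {S : Type*} [MeasurableSpace S]
    (P : Kernel S (S × S)) (x : S) : Measure S :=
  (2 : ℝ≥0∞)⁻¹ • ((P x).map Prod.fst + (P x).map Prod.snd)

/-- `𝒬 f`. -/
noncomputable def Qfun {S : Type*} [MeasurableSpace S]
    (P : Kernel S (S × S)) (f : S → ℝ) (x : S) : ℝ :=
  ∫ y, f y ∂(Qmeas P x)

/-- `𝒬ⁿ f`, by iteration. -/
noncomputable def Qpow {S : Type*} [MeasurableSpace S]
    (P : Kernel S (S × S)) (n : ℕ) (f : S → ℝ) : S → ℝ :=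
  (Qfun P)^[n] f

/-- the distribution `ν 𝒬ᵏ` of the auxiliary chain after `k` steps started from `ν`. -/
noncomputable def nuQ {S : Type*} [MeasurableSpace S]
    (P : Kernel S (S × S)) (ν : Measure S) : ℕ → Measure S
  | 0 => ν
  | k + 1 => (nuQ P ν k).bind (Qmeas P)

/-- The `n`-th generation `𝔾_n = {0,1}ⁿ` of the full binary tree `𝕋`, as a finset of
`List Bool` (nodes of the tree are finite words on `{0,1}`). -/
def gen (n : ℕ) : Finset (List Bool) :=
  Finset.univ.image (fun v : Fin n → Bool => List.ofFn v)

/-- The tree `𝕋_n` up to the `n`-th generation. -/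
def treeUpTo (n : ℕ) : Finset (List Bool) :=
  (Finset.range (n + 1)).biUnion gen

/-- The σ-field generated by `(X_u, u ∈ 𝕋_k)`. -/
def treeSigma {Ω S : Type*} [MeasurableSpace Ω] [MeasurableSpace S]
    (X : List Bool → Ω → S) (k : ℕ) : MeasurableSpace Ω :=
  ⨆ (u : List Bool) (_ : u.length ≤ k), MeasurableSpace.comap (X u) inferInstance

/-- `X = (X_i, i ∈ 𝕋)` is a bifurcating Markov chain on `S` with initial distribution `ν`
and probability kernel `𝒫` (w.r.t. the ambient probability `Pr`): `X_∅ ∼ ν`, each `X_u`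
is measurable, and the branching Markov property holds: for any generation `k` and any
family of bounded measurable `g_u : S × S² → ℝ`,
`E[∏_{u∈𝔾_k} g_u(X_u, X_{u0}, X_{u1}) | σ(X_j, j∈𝕋_k)] = ∏_{u∈𝔾_k} (𝒫g_u)(X_u)` a.s. -/
structure IsBMC {Ω S : Type*} [MeasurableSpace Ω] [MeasurableSpace S]
    (Pr : Measure Ω) (P : Kernel S (S × S)) (ν : Measure S)
    (X : List Bool → Ω → S) : Prop where
  meas : ∀ u, Measurable (X u)
  init : Pr.map (X []) = ν
  branching : ∀ (k : ℕ) (g : List Bool → S → S × S → ℝ),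
    (∀ u, Measurable (Function.uncurry (g u))) →
    (∀ u, ∃ C : ℝ, ∀ x yz, |g u x yz| ≤ C) →
    Pr[fun ω => ∏ u ∈ gen k,
          g u (X u ω) (X (u ++ [false]) ω, X (u ++ [true]) ω) | treeSigma X k]
      =ᵐ[Pr] fun ω => ∏ u ∈ gen k, ∫ yz, g u (X u ω) yz ∂(P (X u ω))

/-!
By the branching Markov property, the pair of children of a node `u ∈ 𝔾ₙ` contributes
`𝒫(f ⊗ 1 + 1 ⊗ f)(X_u) = 2𝒬f(X_u)` in mean, and the families of distinct nodes of `𝔾ₙ` are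
conditionally independent given `𝕋ₙ`. Hence `M_{𝔾ₙ₊₁}(f)` has the mean of `M_{𝔾ₙ}(2𝒬f)`, and
its second moment is that of `M_{𝔾ₙ}(2𝒬f)` plus the mean of `M_{𝔾ₙ}(φ)`, where
`φ = 𝒫((f ⊗ 1 + 1 ⊗ f)²) - (2𝒬f)² = 2𝒬(f²) + 2𝒫(f ⊗ f) - (2𝒬f)²` is the conditional variance of
one family. Both formulas follow by induction on `n` for all bounded measurable `f` at once;
`(2𝒬f)²` cancels between the two terms and `𝒬ᵏ(2𝒬f) = 2𝒬ᵏ⁺¹f` shifts the covariance sum.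
-/

def IsBoundedMeasurable {α : Type*} [MeasurableSpace α] (f : α → ℝ) : Prop :=
  Measurable f ∧ ∃ C, ∀ a, |f a| ≤ C

namespace IsBoundedMeasurable

variable {α β : Type*} [MeasurableSpace α] [MeasurableSpace β] {f g : α → ℝ}

lemma const (c : ℝ) : IsBoundedMeasurable fun _ : α => c :=
  ⟨measurable_const, |c|, fun _ => le_rfl⟩

lemma comp (hf : IsBoundedMeasurable f) {φ : β → α} (hφ : Measurable φ) :
    IsBoundedMeasurable fun b => f (φ b) :=
  let ⟨C, hC⟩ := hf.2
  ⟨hf.1.comp hφ, C, fun _ => hC _⟩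

lemma add (hf : IsBoundedMeasurable f) (hg : IsBoundedMeasurable g) :
    IsBoundedMeasurable fun a => f a + g a :=
  let ⟨C, hC⟩ := hf.2
  let ⟨D, hD⟩ := hg.2
  ⟨hf.1.add hg.1, C + D, fun a => (abs_add_le _ _).trans (add_le_add (hC a) (hD a))⟩

lemma mul (hf : IsBoundedMeasurable f) (hg : IsBoundedMeasurable g) :
    IsBoundedMeasurable fun a => f a * g a :=
  let ⟨C, hC⟩ := hf.2
  let ⟨D, hD⟩ := hg.2
  ⟨hf.1.mul hg.1, C * D, fun a => by
    rw [abs_mul]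
    exact mul_le_mul (hC a) (hD a) (abs_nonneg _) ((abs_nonneg _).trans (hC a))⟩

lemma const_mul (hf : IsBoundedMeasurable f) (c : ℝ) : IsBoundedMeasurable fun a => c * f a :=
  (const c).mul hf

lemma sub (hf : IsBoundedMeasurable f) (hg : IsBoundedMeasurable g) :
    IsBoundedMeasurable fun a => f a - g a := by
  simpa only [sub_eq_add_neg, neg_one_mul] using hf.add (hg.const_mul (-1))

lemma sq (hf : IsBoundedMeasurable f) : IsBoundedMeasurable fun a => f a ^ 2 := by
  simpa only [pow_two] using hf.mul hf

lemma integrable (hf : IsBoundedMeasurable f) (μ : Measure α) [IsFiniteMeasure μ] :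
    Integrable f μ :=
  let ⟨C, hC⟩ := hf.2
  .of_bound hf.1.aestronglyMeasurable C (ae_of_all _ fun a => (hC a : ‖f a‖ ≤ C))

end IsBoundedMeasurable

lemma integral_sq_finsetSum {Ω ι : Type*} [MeasurableSpace Ω] {μ : Measure Ω} (s : Finset ι)
    {F : ι → Ω → ℝ} (hF : ∀ i ∈ s, ∀ j ∈ s, Integrable (fun ω => F i ω * F j ω) μ) :
    ∫ ω, (∑ i ∈ s, F i ω) ^ 2 ∂μ = ∑ i ∈ s, ∑ j ∈ s, ∫ ω, F i ω * F j ω ∂μ := by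
  simp_rw [pow_two, Finset.sum_mul_sum]
  rw [integral_finsetSum _ fun i hi => integrable_finsetSum _ fun j hj => hF i hi j hj]
  exact Finset.sum_congr rfl fun i hi => integral_finsetSum _ fun j hj => hF i hi j hj

section Operators

variable {S : Type*} [MeasurableSpace S] (P : Kernel S (S × S))

noncomputable def Pfun (g : S × S → ℝ) (x : S) : ℝ :=
  ∫ yz, g yz ∂(P x)

variable {P}

lemma pfun_const_mul (c : ℝ) (g : S × S → ℝ) :
    Pfun P (fun yz => c * g yz) = fun x => c * Pfun P g x :=
  funext fun _ => integral_const_mul c g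

lemma qfun_const_mul (c : ℝ) (f : S → ℝ) :
    Qfun P (fun y => c * f y) = fun x => c * Qfun P f x :=
  funext fun _ => integral_const_mul c f

@[simp]
lemma qpow_zero (f : S → ℝ) : Qpow P 0 f = f :=
  rfl

lemma qpow_succ (n : ℕ) (f : S → ℝ) : Qpow P (n + 1) f = Qpow P n (Qfun P f) :=
  Function.iterate_succ_apply _ _ _

lemma qpow_const_mul (c : ℝ) (n : ℕ) (f : S → ℝ) :
    Qpow P n (fun y => c * f y) = fun x => c * Qpow P n f x := by
  induction n generalizing f with
  | zero => rfl
  | succ n ih => rw [qpow_succ, qpow_succ, qfun_const_mul, ih]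

lemma qpow_pfun_qpow_const_mul (c : ℝ) (m k : ℕ) (g : S → ℝ) :
    Qpow P m (Pfun P fun yz =>
        Qpow P k (fun y => c * g y) yz.1 * Qpow P k (fun y => c * g y) yz.2)
      = fun x => c ^ 2 * Qpow P m (Pfun P fun yz => Qpow P k g yz.1 * Qpow P k g yz.2) x := by
  have h : (fun yz : S × S =>
        Qpow P k (fun y => c * g y) yz.1 * Qpow P k (fun y => c * g y) yz.2)
      = fun yz => c ^ 2 * (Qpow P k g yz.1 * Qpow P k g yz.2) := by
    funext yz
    rw [qpow_const_mul]
    ring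
  rw [h, pfun_const_mul, qpow_const_mul]

variable [IsMarkovKernel P] {f g : S → ℝ}

lemma IsBoundedMeasurable.pfun {h : S × S → ℝ} (hh : IsBoundedMeasurable h) :
    IsBoundedMeasurable (Pfun P h) :=
  let ⟨C, hC⟩ := hh.2
  ⟨hh.1.stronglyMeasurable.integral_kernel.measurable, C, fun x => by
    simpa [Pfun] using norm_integral_le_of_norm_le_const (μ := P x) (f := h)
      (ae_of_all _ fun yz => (hC yz : ‖h yz‖ ≤ C))⟩

lemma pfun_add {h₁ h₂ : S × S → ℝ} (hh₁ : IsBoundedMeasurable h₁)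
    (hh₂ : IsBoundedMeasurable h₂) (x : S) :
    Pfun P (fun yz => h₁ yz + h₂ yz) x = Pfun P h₁ x + Pfun P h₂ x :=
  integral_add (hh₁.integrable _) (hh₂.integrable _)

lemma pfun_fst_add_snd (hf : IsBoundedMeasurable f) (x : S) :
    Pfun P (fun yz => f yz.1 + f yz.2) x = 2 * Qfun P f x := by
  rw [Qfun, Qmeas, integral_smul_measure, integral_add_measure (hf.integrable _)
    (hf.integrable _), integral_map measurable_fst.aemeasurable hf.1.aestronglyMeasurable,
    integral_map measurable_snd.aemeasurable hf.1.aestronglyMeasurable,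
    pfun_add (hf.comp measurable_fst) (hf.comp measurable_snd)]
  simp [Pfun, ENNReal.toReal_inv]

lemma qfun_eq_pfun (hf : IsBoundedMeasurable f) :
    Qfun P f = fun x => 2⁻¹ * Pfun P (fun yz => f yz.1 + f yz.2) x := by
  funext x
  rw [pfun_fst_add_snd hf]
  ring

lemma IsBoundedMeasurable.qfun (hf : IsBoundedMeasurable f) :
    IsBoundedMeasurable (Qfun P f) := by
  rw [qfun_eq_pfun hf]
  exact ((hf.comp measurable_fst).add (hf.comp measurable_snd)).pfun.const_mul _

lemma IsBoundedMeasurable.qpow (hf : IsBoundedMeasurable f) (n : ℕ) :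
    IsBoundedMeasurable (Qpow P n f) := by
  induction n generalizing f with
  | zero => exact hf
  | succ n ih => rw [qpow_succ]; exact ih hf.qfun

instance Qmeas.isProbabilityMeasure (x : S) : IsProbabilityMeasure (Qmeas P x) := by
  constructor
  simp [Qmeas, Measure.map_apply measurable_fst MeasurableSet.univ,
    Measure.map_apply measurable_snd MeasurableSet.univ, ENNReal.inv_two_add_inv_two]

lemma qfun_add (hf : IsBoundedMeasurable f) (hg : IsBoundedMeasurable g) :
    Qfun P (fun y => f y + g y) = fun x => Qfun P f x + Qfun P g x :=
  funext fun _ => integral_add (hf.integrable _) (hg.integrable _)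

lemma qpow_add (hf : IsBoundedMeasurable f) (hg : IsBoundedMeasurable g) (n : ℕ) :
    Qpow P n (fun y => f y + g y) = fun x => Qpow P n f x + Qpow P n g x := by
  induction n generalizing f g with
  | zero => rfl
  | succ n ih => rw [qpow_succ, qpow_succ, qpow_succ, qfun_add hf hg, ih hf.qfun hg.qfun]

lemma qpow_pfun_sq_fst_add_snd (hf : IsBoundedMeasurable f) (n : ℕ) (x : S) :
    Qpow P n (Pfun P (fun yz => (f yz.1 + f yz.2) ^ 2)) x
      = 2 * Qpow P (n + 1) (fun y => f y ^ 2) x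
        + 2 * Qpow P n (Pfun P (fun yz => f yz.1 * f yz.2)) x := by
  have hsq : Pfun P (fun yz => (f yz.1 + f yz.2) ^ 2)
      = fun y => 2 * Qfun P (fun y => f y ^ 2) y + 2 * Pfun P (fun yz => f yz.1 * f yz.2) y := by
    funext y
    have hfst := hf.comp (β := S × S) measurable_fst
    have hsnd := hf.comp (β := S × S) measurable_snd
    rw [← pfun_fst_add_snd hf.sq, ← congrFun (pfun_const_mul 2 _) y,
      ← pfun_add (hfst.sq.add hsnd.sq) ((hfst.mul hsnd).const_mul 2)]
    congr 1
    funext yz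
    ring
  rw [hsq, qpow_add (hf.sq.qfun.const_mul 2)
    (((hf.comp measurable_fst).mul (hf.comp measurable_snd)).pfun.const_mul 2),
    qpow_const_mul, qpow_const_mul, qpow_succ]

end Operators

lemma sum_gen {M : Type*} [AddCommMonoid M] (n : ℕ) (F : List Bool → M) :
    ∑ u ∈ gen n, F u = ∑ v : Fin n → Bool, F (List.ofFn v) :=
  Finset.sum_image fun _ _ _ _ h => List.ofFn_injective h

lemma gen_zero : gen 0 = {[]} := rfl

lemma sum_gen_succ {M : Type*} [AddCommMonoid M] (n : ℕ) (F : List Bool → M) :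
    ∑ u ∈ gen (n + 1), F u = ∑ u ∈ gen n, (F (u ++ [false]) + F (u ++ [true])) := by
  rw [sum_gen, sum_gen, ← (Fin.snocEquiv fun _ => Bool).sum_comp, Fintype.sum_prod_type,
    Fintype.sum_bool, add_comm, ← Finset.sum_add_distrib]
  simp only [Fin.snocEquiv_apply, List.ofFn_succ', Fin.snoc_castSucc, Fin.snoc_last,
    List.concat_eq_append]

namespace IsBMC

variable {Ω S : Type*} [MeasurableSpace Ω] [MeasurableSpace S] {Pr : Measure Ω}
  {P : Kernel S (S × S)} {ν : Measure S} {X : List Bool → Ω → S} {x : S} {f : S → ℝ}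

lemma measurable_children (hX : IsBMC Pr P ν X) (u : List Bool) :
    Measurable fun ω => (X (u ++ [false]) ω, X (u ++ [true]) ω) :=
  (hX.meas _).prodMk (hX.meas _)

lemma integral_root (hX : IsBMC Pr P (Measure.dirac x) X) {g : S → ℝ} (hg : Measurable g) :
    ∫ ω, g (X [] ω) ∂Pr = g x := by
  rw [← integral_map (hX.meas []).aemeasurable hg.aestronglyMeasurable, hX.init]
  exact integral_dirac' g x hg.stronglyMeasurable

lemma integral_prod_children [IsFiniteMeasure Pr] (hX : IsBMC Pr P ν X) (k : ℕ)
    (g : List Bool → S → S × S → ℝ) (hgm : ∀ u, Measurable (Function.uncurry (g u)))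
    (hgb : ∀ u, ∃ C : ℝ, ∀ x yz, |g u x yz| ≤ C) :
    ∫ ω, ∏ u ∈ gen k, g u (X u ω) (X (u ++ [false]) ω, X (u ++ [true]) ω) ∂Pr
      = ∫ ω, ∏ u ∈ gen k, ∫ yz, g u (X u ω) yz ∂(P (X u ω)) ∂Pr := by
  have hle : treeSigma X k ≤ ‹MeasurableSpace Ω› :=
    iSup₂_le fun u _ => (hX.meas u).comap_le
  rw [← integral_condExp hle]
  exact integral_congr_ae (hX.branching k g hgm hgb)

variable [IsFiniteMeasure Pr] [IsMarkovKernel P]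

lemma integral_prod_children_of_subset (hX : IsBMC Pr P ν X) {k : ℕ}
    {t : Finset (List Bool)} (ht : t ⊆ gen k) {G : List Bool → S × S → ℝ}
    (hG : ∀ u, IsBoundedMeasurable (G u)) :
    ∫ ω, ∏ u ∈ t, G u (X (u ++ [false]) ω, X (u ++ [true]) ω) ∂Pr
      = ∫ ω, ∏ u ∈ t, Pfun P (G u) (X u ω) ∂Pr := by
  -- extend the family by `1` off `t`, where `𝒫 1 = 1` leaves the product unchanged
  set G' : List Bool → S × S → ℝ := fun u => if u ∈ t then G u else fun _ => 1
  have hG' : ∀ u, IsBoundedMeasurable (G' u) := fun u => by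
    by_cases hu : u ∈ t
    · simpa [G', hu] using hG u
    · simpa [G', hu] using IsBoundedMeasurable.const (α := S × S) 1
  have key := hX.integral_prod_children k (fun u _ => G' u)
    (fun u => (hG' u).1.comp measurable_snd)
    (fun u => let ⟨C, hC⟩ := (hG' u).2; ⟨C, fun _ yz => hC yz⟩)
  have hrestrict : ∀ a : List Bool → ℝ,
      ∏ u ∈ gen k, (if u ∈ t then a u else 1) = ∏ u ∈ t, a u :=
    fun a => by rw [Finset.prod_ite_mem, Finset.inter_eq_right.mpr ht]
  have hG'_apply : ∀ u yz, G' u yz = if u ∈ t then G u yz else 1 := fun u yz => ite_apply ..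
  have hPG' : ∀ u x, ∫ yz, G' u yz ∂(P x) = if u ∈ t then Pfun P (G u) x else 1 := by
    intro u x
    by_cases hu : u ∈ t <;> simp [G', hu, Pfun]
  simp only [hPG'] at key
  simpa only [hG'_apply, hrestrict] using key

lemma integral_children (hX : IsBMC Pr P ν X) {k : ℕ} {u : List Bool} (hu : u ∈ gen k)
    {g : S × S → ℝ} (hg : IsBoundedMeasurable g) :
    ∫ ω, g (X (u ++ [false]) ω, X (u ++ [true]) ω) ∂Pr
      = ∫ ω, Pfun P g (X u ω) ∂Pr := by
  simpa using hX.integral_prod_children_of_subset (Finset.singleton_subset_iff.mpr hu)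
    (G := fun _ => g) fun _ => hg

lemma integral_children_mul (hX : IsBMC Pr P ν X) {k : ℕ} {u v : List Bool}
    (hu : u ∈ gen k) (hv : v ∈ gen k) (huv : u ≠ v) {g₁ g₂ : S × S → ℝ}
    (hg₁ : IsBoundedMeasurable g₁) (hg₂ : IsBoundedMeasurable g₂) :
    ∫ ω, g₁ (X (u ++ [false]) ω, X (u ++ [true]) ω)
        * g₂ (X (v ++ [false]) ω, X (v ++ [true]) ω) ∂Pr
      = ∫ ω, Pfun P g₁ (X u ω) * Pfun P g₂ (X v ω) ∂Pr := by
  have h := hX.integral_prod_children_of_subset (k := k) (t := {u, v})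
    (by simp [Finset.insert_subset_iff, hu, hv]) (G := fun w => if w = u then g₁ else g₂)
    (fun w => by split_ifs; exacts [hg₁, hg₂])
  simpa [Finset.prod_pair huv, huv.symm] using h

lemma integral_sum_children (hX : IsBMC Pr P ν X) (k : ℕ) {h : S × S → ℝ}
    (hh : IsBoundedMeasurable h) :
    ∫ ω, ∑ u ∈ gen k, h (X (u ++ [false]) ω, X (u ++ [true]) ω) ∂Pr
      = ∫ ω, ∑ u ∈ gen k, Pfun P h (X u ω) ∂Pr := by
  rw [integral_finsetSum _ fun u _ => (hh.comp (hX.measurable_children u)).integrable Pr,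
    integral_finsetSum _ fun u _ => (hh.pfun.comp (hX.meas u)).integrable Pr]
  exact Finset.sum_congr rfl fun u hu => hX.integral_children hu hh

lemma integral_sq_sum_children (hX : IsBMC Pr P ν X) (k : ℕ) {h : S × S → ℝ}
    (hh : IsBoundedMeasurable h) :
    ∫ ω, (∑ u ∈ gen k, h (X (u ++ [false]) ω, X (u ++ [true]) ω)) ^ 2 ∂Pr
      = ∫ ω, (∑ u ∈ gen k, Pfun P h (X u ω)) ^ 2 ∂Pr
        + ∫ ω, ∑ u ∈ gen k,
            (Pfun P (fun yz => h yz ^ 2) (X u ω) - Pfun P h (X u ω) ^ 2) ∂Pr := by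
  set H : List Bool → Ω → ℝ := fun u ω => h (X (u ++ [false]) ω, X (u ++ [true]) ω)
  set ψ : List Bool → Ω → ℝ := fun u ω => Pfun P h (X u ω)
  set D : List Bool → Ω → ℝ :=
    fun u ω => Pfun P (fun yz => h yz ^ 2) (X u ω) - Pfun P h (X u ω) ^ 2
  have hH : ∀ u, IsBoundedMeasurable (H u) := fun u => hh.comp (hX.measurable_children u)
  have hψ : ∀ u, IsBoundedMeasurable (ψ u) := fun u => hh.pfun.comp (hX.meas u)
  have hD : ∀ u, IsBoundedMeasurable (D u) :=
    fun u => (hh.sq.pfun.sub hh.pfun.sq).comp (hX.meas u)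
  have hpair : ∀ u ∈ gen k, ∀ v ∈ gen k, ∫ ω, H u ω * H v ω ∂Pr
      = ∫ ω, ψ u ω * ψ v ω ∂Pr + if u = v then ∫ ω, D u ω ∂Pr else 0 := by
    intro u hu v hv
    rcases eq_or_ne u v with rfl | huv
    · rw [if_pos rfl,
        ← integral_add (((hψ u).mul (hψ u)).integrable Pr) ((hD u).integrable Pr)]
      simpa [H, ψ, D, ← pow_two] using hX.integral_children hu hh.sq
    · rw [if_neg huv, add_zero]
      exact hX.integral_children_mul hu hv huv hh hh
  rw [integral_sq_finsetSum (F := H) _ fun u _ v _ => ((hH u).mul (hH v)).integrable Pr,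
    integral_sq_finsetSum (F := ψ) _ fun u _ v _ => ((hψ u).mul (hψ v)).integrable Pr,
    integral_finsetSum (f := D) _ fun u _ => (hD u).integrable Pr,
    Finset.sum_congr rfl fun u hu => Finset.sum_congr rfl fun v hv => hpair u hu v hv]
  simp [Finset.sum_add_distrib, Finset.sum_ite_eq]

lemma integral_sum_gen_succ (hX : IsBMC Pr P ν X) (hf : IsBoundedMeasurable f) (n : ℕ) :
    ∫ ω, ∑ u ∈ gen (n + 1), f (X u ω) ∂Pr
      = ∫ ω, ∑ u ∈ gen n, 2 * Qfun P f (X u ω) ∂Pr := by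
  simp_rw [sum_gen_succ n]
  rw [hX.integral_sum_children n ((hf.comp measurable_fst).add (hf.comp measurable_snd))]
  simp_rw [pfun_fst_add_snd hf]

lemma integral_sq_sum_gen_succ (hX : IsBMC Pr P ν X) (hf : IsBoundedMeasurable f) (n : ℕ) :
    ∫ ω, (∑ u ∈ gen (n + 1), f (X u ω)) ^ 2 ∂Pr
      = ∫ ω, (∑ u ∈ gen n, 2 * Qfun P f (X u ω)) ^ 2 ∂Pr
        + ∫ ω, ∑ u ∈ gen n, (Pfun P (fun yz => (f yz.1 + f yz.2) ^ 2) (X u ω)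
            - (2 * Qfun P f (X u ω)) ^ 2) ∂Pr := by
  simp_rw [sum_gen_succ n]
  rw [hX.integral_sq_sum_children n ((hf.comp measurable_fst).add (hf.comp measurable_snd))]
  simp_rw [pfun_fst_add_snd hf]

lemma integral_sum_gen (hX : IsBMC Pr P (Measure.dirac x) X) (hf : IsBoundedMeasurable f)
    (n : ℕ) : ∫ ω, ∑ u ∈ gen n, f (X u ω) ∂Pr = 2 ^ n * Qpow P n f x := by
  induction n generalizing f with
  | zero => simpa [gen_zero] using hX.integral_root hf.1
  | succ n ih =>
    rw [hX.integral_sum_gen_succ hf, ih (hf.qfun.const_mul 2), qpow_const_mul, qpow_succ]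
    ring

lemma integral_sq_sum_gen (hX : IsBMC Pr P (Measure.dirac x) X) (hf : IsBoundedMeasurable f)
    (n : ℕ) :
    ∫ ω, (∑ u ∈ gen n, f (X u ω)) ^ 2 ∂Pr
      = 2 ^ n * Qpow P n (fun y => f y ^ 2) x
        + ∑ k ∈ Finset.range n, 2 ^ (n + k)
          * Qpow P (n - k - 1) (Pfun P fun yz => Qpow P k f yz.1 * Qpow P k f yz.2) x := by
  induction n generalizing f with
  | zero => simpa [gen_zero] using hX.integral_root hf.sq.1
  | succ n ih =>
    have hψ : IsBoundedMeasurable fun y => 2 * Qfun P f y := hf.qfun.const_mul 2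
    have hφ : IsBoundedMeasurable fun y =>
        Pfun P (fun yz => (f yz.1 + f yz.2) ^ 2) y - (2 * Qfun P f y) ^ 2 :=
      ((hf.comp measurable_fst).add (hf.comp measurable_snd)).sq.pfun.sub hψ.sq
    have hdiag : Qpow P n (fun y => (2 * Qfun P f y) ^ 2) x
        + Qpow P n (fun y => Pfun P (fun yz => (f yz.1 + f yz.2) ^ 2) y
          - (2 * Qfun P f y) ^ 2) x
        = 2 * Qpow P (n + 1) (fun y => f y ^ 2) x
          + 2 * Qpow P n (Pfun P fun yz => f yz.1 * f yz.2) x := by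
      rw [← congrFun (qpow_add hψ.sq hφ n) x, ← qpow_pfun_sq_fst_add_snd hf]
      simp
    rw [hX.integral_sq_sum_gen_succ hf, ih hψ, hX.integral_sum_gen hφ, Finset.sum_range_succ']
    simp_rw [qpow_pfun_qpow_const_mul, ← qpow_succ]
    have hsum : ∑ k ∈ Finset.range n, (2 : ℝ) ^ (n + k) * (2 ^ 2 * Qpow P (n - k - 1)
          (Pfun P fun yz => Qpow P (k + 1) f yz.1 * Qpow P (k + 1) f yz.2) x)
        = ∑ k ∈ Finset.range n, 2 ^ (n + 1 + (k + 1)) * Qpow P (n + 1 - (k + 1) - 1)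
          (Pfun P fun yz => Qpow P (k + 1) f yz.1 * Qpow P (k + 1) f yz.2) x :=
      Finset.sum_congr rfl fun k _ => by rw [Nat.add_sub_add_right]; ring
    rw [hsum, Nat.sub_zero, Nat.add_sub_cancel, qpow_zero]
    linear_combination 2 ^ n * hdiag

end IsBMC

/-- Moments over a generation of a BMC started at `x` (i.e. `ν = δ_x`): for bounded
measurable `f`, (i) `E_x[M_{𝔾_n}(f)] = 2ⁿ 𝒬ⁿf(x)`, and
(ii) `E_x[M_{𝔾_n}(f)²] = 2ⁿ 𝒬ⁿ(f²)(x) + Σ_{k<n} 2^{n+k} 𝒬^{n-k-1}(𝒫(𝒬ᵏf ⊗ 𝒬ᵏf))(x)`. -/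
theorem bmc_generation_moments {Ω S : Type*} [MeasurableSpace Ω] [MeasurableSpace S]
    (Pr : Measure Ω) [IsProbabilityMeasure Pr]
    (P : Kernel S (S × S)) [IsMarkovKernel P]
    (x : S) (X : List Bool → Ω → S)
    (hX : IsBMC Pr P (Measure.dirac x) X)
    (f : S → ℝ) (hfm : Measurable f) (hfb : ∃ C : ℝ, ∀ y, |f y| ≤ C) (n : ℕ) :
    (∫ ω, (∑ u ∈ gen n, f (X u ω)) ∂Pr = 2 ^ n * Qpow P n f x)
    ∧ ∫ ω, (∑ u ∈ gen n, f (X u ω)) ^ 2 ∂Pr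
        = 2 ^ n * Qpow P n (fun y => (f y) ^ 2) x
          + ∑ k ∈ Finset.range n, (2 : ℝ) ^ (n + k)
              * Qpow P (n - k - 1)
                  (fun y => ∫ yz, Qpow P k f yz.1 * Qpow P k f yz.2 ∂(P y)) x :=
  ⟨hX.integral_sum_gen ⟨hfm, hfb⟩ n, hX.integral_sq_sum_gen ⟨hfm, hfb⟩ n⟩
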